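/- arXiv:1811.03247 — 2 statements merged into one kernel-verified Lean document; each statement's English description precedes it below -/
import Mathlib

section
/- The conductor of the subring A = ℂ[w, zw, z², z³] in ℂ[z,w] is the ideal generated by w and z², and there are ring isomorphisms ℂ[z,w]/𝔠 ≅ ℂ[z]/(z²) and A/𝔠 ≅ ℂ. -/
open MvPolynomial

/-- The subalgebra `A = ℂ[w, zw, z², z³]` of `ℂ[z,w]` (with `z = X 0`, `w = X 1`). -/
noncomputable def Awz : Subalgebra ℂ (MvPolynomial (Fin 2) ℂ) :=
  Algebra.adjoin ℂ {X 1, X 0 * X 1, (X 0 : MvPolynomial (Fin 2) ℂ) ^ 2, (X 0) ^ 3}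

/-- The ideal `(w, z²)` of `ℂ[z,w]`. -/
noncomputable def cwz : Ideal (MvPolynomial (Fin 2) ℂ) :=
  Ideal.span {X 1, (X 0 : MvPolynomial (Fin 2) ℂ) ^ 2}

/-
Both `A` and `𝔠` are cut out by coefficient conditions: `p ∈ A` iff `p` has no `z`-term, and
`p ∈ 𝔠` iff moreover `p` has no constant term. Since the `z`-coefficient of `p * q` is
`p(0) q_z + p_z q(0)`, multiplying by `z` moves the constant term of `p` to the `z`-term, which
identifies the conductor with `𝔠`. Both quotients are then read off from the two surviving
coefficients `p(0)` and `p_z`.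
-/

namespace MvPolynomial

theorem coeff_single_one_mul {σ R : Type*} [CommSemiring R] [DecidableEq σ] (i : σ)
    (p q : MvPolynomial σ R) :
    coeff (Finsupp.single i 1) (p * q) =
      coeff 0 p * coeff (Finsupp.single i 1) q + coeff (Finsupp.single i 1) p * coeff 0 q := by
  rw [coeff_mul, Finsupp.antidiagonal_single,
    show Finset.HasAntidiagonal.antidiagonal 1 = {(0, 1), (1, 0)} from rfl]
  simp

theorem mem_of_forall_monomial_mem {σ R S : Type*} [CommSemiring R] [SetLike S (MvPolynomial σ R)]
    [AddSubmonoidClass S (MvPolynomial σ R)] {M : S} {p : MvPolynomial σ R}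
    (h : ∀ v ∈ p.support, monomial v (coeff v p) ∈ M) : p ∈ M := by
  rw [p.as_sum]
  exact sum_mem h

end MvPolynomial

theorem Polynomial.X_sq_dvd_C_add_C_mul_X_iff {R : Type*} [Semiring R] (a b : R) :
    Polynomial.X ^ 2 ∣ Polynomial.C a + Polynomial.C b * Polynomial.X ↔ a = 0 ∧ b = 0 := by
  simp [Polynomial.X_pow_dvd_iff, Nat.le_one_iff_eq_zero_or_eq_one, or_imp, forall_and,
    Polynomial.coeff_X, Polynomial.coeff_C]

lemma X0_pow_mem_Awz {a : ℕ} (ha : a ≠ 1) : (X 0 : MvPolynomial (Fin 2) ℂ) ^ a ∈ Awz := by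
  obtain ⟨k, l, rfl⟩ : ∃ k l, a = 2 * k + 3 * l := by
    rcases Nat.even_or_odd' a with ⟨k, rfl | rfl⟩
    · exact ⟨k, 0, by ring⟩
    · exact ⟨k - 1, 1, by omega⟩
  rw [pow_add, pow_mul, pow_mul]
  exact mul_mem (pow_mem (Algebra.subset_adjoin (by simp)) k)
    (pow_mem (Algebra.subset_adjoin (by simp)) l)

lemma X0_pow_mul_X1_mem_Awz (a : ℕ) : (X 0 : MvPolynomial (Fin 2) ℂ) ^ a * X 1 ∈ Awz := by
  rcases Nat.lt_or_ge a 2 with ha | ha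
  · interval_cases a <;> exact Algebra.subset_adjoin (by simp)
  · exact mul_mem (X0_pow_mem_Awz (by omega)) (Algebra.subset_adjoin (by simp))

lemma monomial_mem_Awz {v : Fin 2 →₀ ℕ} (hv : v ≠ Finsupp.single 0 1) (c : ℂ) :
    monomial v c ∈ Awz := by
  rw [monomial_fin_two, mul_assoc]
  refine mul_mem (Awz.algebraMap_mem c) ?_
  rcases hv1 : v 1 with _ | b
  · have hv0 : v 0 ≠ 1 := fun hv0 => hv (by ext i; fin_cases i <;> simp [hv0, hv1])
    simpa using X0_pow_mem_Awz hv0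
  · rw [pow_succ', ← mul_assoc]
    exact mul_mem (X0_pow_mul_X1_mem_Awz _) (pow_mem (Algebra.subset_adjoin (by simp)) b)

lemma mem_Awz_iff (p : MvPolynomial (Fin 2) ℂ) :
    p ∈ Awz ↔ coeff (Finsupp.single 0 1) p = 0 := by
  refine ⟨fun hp => ?_, fun hp => mem_of_forall_monomial_mem fun v hv => monomial_mem_Awz ?_ _⟩
  · induction hp using Algebra.adjoin_induction with
    | mem x hx =>
      rcases hx with rfl | rfl | rfl | rfl <;>
        simp [coeff_single_one_mul, coeff_X, coeff_X_pow, Finsupp.single_eq_single_iff]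
    | algebraMap r => simp [algebraMap_eq, coeff_C, eq_comm, Finsupp.single_eq_zero]
    | add x y _ _ hx hy => simp [hx, hy]
    | mul x y _ _ hx hy => simp [coeff_single_one_mul, hx, hy]
  · rintro rfl
    exact mem_support_iff.mp hv hp

lemma monomial_mem_cwz {v : Fin 2 →₀ ℕ} (hv₀ : v ≠ 0) (hv₁ : v ≠ Finsupp.single 0 1)
    (c : ℂ) :
    monomial v c ∈ cwz := by
  rw [monomial_fin_two]
  rcases hv1 : v 1 with _ | b
  · obtain ⟨a, ha⟩ : ∃ a, v 0 = a + 2 := by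
      refine Nat.exists_eq_add_of_le' ?_
      by_contra! h
      interval_cases hv0 : v 0
      · exact hv₀ (by ext i; fin_cases i <;> simp [hv0, hv1])
      · exact hv₁ (by ext i; fin_cases i <;> simp [hv0, hv1])
    convert cwz.mul_mem_left (C c * X 0 ^ a) (Ideal.subset_span (by simp) : X 0 ^ 2 ∈ cwz)
      using 1
    rw [ha]; ring
  · convert cwz.mul_mem_left (C c * X 0 ^ v 0 * X 1 ^ b)
      (Ideal.subset_span (by simp) : X 1 ∈ cwz) using 1
    ring

lemma mem_cwz_of_coeff {p : MvPolynomial (Fin 2) ℂ} (h₀ : coeff 0 p = 0)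
    (h₁ : coeff (Finsupp.single 0 1) p = 0) : p ∈ cwz :=
  mem_of_forall_monomial_mem fun v hv =>
    monomial_mem_cwz (by rintro rfl; exact mem_support_iff.mp hv h₀)
      (by rintro rfl; exact mem_support_iff.mp hv h₁) _

noncomputable def wZeroModZSq :
    MvPolynomial (Fin 2) ℂ →+* Polynomial ℂ ⧸ Ideal.span {(Polynomial.X : Polynomial ℂ) ^ 2} :=
  (Ideal.Quotient.mk _).comp (aeval ![Polynomial.X, 0]).toRingHom

lemma wZeroModZSq_surjective : Function.Surjective wZeroModZSq := by
  refine Ideal.Quotient.mk_surjective.comp fun f => ⟨Polynomial.aeval (X 0) f, ?_⟩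
  simp [← Polynomial.aeval_algHom_apply]

lemma cwz_le_ker_wZeroModZSq : cwz ≤ RingHom.ker wZeroModZSq := by
  rw [cwz, Ideal.span_le]
  rintro x (rfl | rfl) <;> simp [wZeroModZSq]

lemma wZeroModZSq_apply (p : MvPolynomial (Fin 2) ℂ) :
    wZeroModZSq p = Ideal.Quotient.mk _
      (Polynomial.C (coeff 0 p) + Polynomial.C (coeff (Finsupp.single 0 1) p) * Polynomial.X) := by
  have hp : p - (C (coeff 0 p) + C (coeff (Finsupp.single 0 1) p) * X 0) ∈ cwz :=
    mem_cwz_of_coeff (by simp) (by simp [coeff_C, coeff_X, Finsupp.single_eq_zero, eq_comm])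
  rw [(RingHom.sub_mem_ker_iff _).mp (cwz_le_ker_wZeroModZSq hp)]
  simp [wZeroModZSq]

lemma ker_wZeroModZSq : RingHom.ker wZeroModZSq = cwz := by
  refine le_antisymm (fun p hp => ?_) cwz_le_ker_wZeroModZSq
  rw [RingHom.mem_ker, wZeroModZSq_apply, Ideal.Quotient.eq_zero_iff_mem,
    Ideal.mem_span_singleton, Polynomial.X_sq_dvd_C_add_C_mul_X_iff] at hp
  exact mem_cwz_of_coeff hp.1 hp.2

lemma mem_cwz_iff (p : MvPolynomial (Fin 2) ℂ) :
    p ∈ cwz ↔ coeff 0 p = 0 ∧ coeff (Finsupp.single 0 1) p = 0 := by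
  rw [← ker_wZeroModZSq, RingHom.mem_ker, wZeroModZSq_apply, Ideal.Quotient.eq_zero_iff_mem,
    Ideal.mem_span_singleton, Polynomial.X_sq_dvd_C_add_C_mul_X_iff]

lemma mem_Awz_and_forall_mul_mem_iff (p : MvPolynomial (Fin 2) ℂ) :
    (p ∈ Awz ∧ ∀ q, p * q ∈ Awz) ↔ p ∈ cwz := by
  simp only [mem_Awz_iff, mem_cwz_iff, coeff_single_one_mul]
  refine ⟨fun ⟨h₁, hq⟩ => ⟨?_, h₁⟩,
    fun ⟨h₀, h₁⟩ => ⟨h₁, fun q => by simp [h₀, h₁]⟩⟩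
  simpa [h₁, coeff_X] using hq (X 0)

lemma constantCoeff_comp_val_surjective :
    Function.Surjective (constantCoeff.comp (Awz.val : Awz →+* MvPolynomial (Fin 2) ℂ)) :=
  fun c => ⟨algebraMap ℂ Awz c, by simp⟩

lemma ker_constantCoeff_comp_val :
    RingHom.ker (constantCoeff.comp (Awz.val : Awz →+* MvPolynomial (Fin 2) ℂ)) =
      cwz.comap Awz.val := by
  ext ⟨a, ha⟩
  simp [mem_cwz_iff, (mem_Awz_iff a).mp ha, constantCoeff_eq]

/-- The conductor of `A = ℂ[w, zw, z², z³]` in `ℂ[z,w]` is the ideal generated by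
`w` and `z²`, with `ℂ[z,w]/𝔠 ≅ ℂ[z]/(z²)` and `A/𝔠 ≅ ℂ`. -/
theorem conductor_wz :
    (∀ p : MvPolynomial (Fin 2) ℂ,
        (p ∈ Awz ∧ ∀ q : MvPolynomial (Fin 2) ℂ, p * q ∈ Awz) ↔ p ∈ cwz) ∧
    Nonempty ((MvPolynomial (Fin 2) ℂ ⧸ cwz) ≃+*
        (Polynomial ℂ ⧸ Ideal.span {(Polynomial.X : Polynomial ℂ) ^ 2})) ∧
    Nonempty ((Awz ⧸ cwz.comap Awz.val) ≃+* ℂ) :=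
  ⟨mem_Awz_and_forall_mul_mem_iff,
    ⟨(Ideal.quotEquivOfEq ker_wZeroModZSq.symm).trans
      (RingHom.quotientKerEquivOfSurjective wZeroModZSq_surjective)⟩,
    ⟨(Ideal.quotEquivOfEq ker_constantCoeff_comp_val.symm).trans
      (RingHom.quotientKerEquivOfSurjective constantCoeff_comp_val_surjective)⟩⟩
end

section
/- Let R = ℂ[z]/(z⁴), A' = {a + bz² : a,b ∈ ℂ} ⊆ R. Two units u₁ = α₁ + β₁z + γ₁z² + δ₁z³ and u₂ = α₂ + β₂z + γ₂z² + δ₂z³ of R lie in the same orbit of the multiplication action of (A')ˣ if and only if β₁/α₁ = β₂/α₂ and (δ₁α₁ − γ₁β₁)/α₁² = (δ₂α₂ − γ₂β₂)/α₂². -/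
open Polynomial

/-- The ring `R = ℂ[z]/(z⁴)`. -/
noncomputable abbrev Rz4 : Type := Polynomial ℂ ⧸ Ideal.span {(X : Polynomial ℂ) ^ 4}

/-- The quotient map `ℂ[z] → ℂ[z]/(z⁴)`. -/
noncomputable abbrev πz4 : Polynomial ℂ →+* Rz4 :=
  Ideal.Quotient.mk (Ideal.span {(X : Polynomial ℂ) ^ 4})

/-- The subalgebra `A' = {a + b z²} ⊆ R`. -/
noncomputable def A'z4 : Subalgebra ℂ Rz4 :=
  Algebra.adjoin ℂ {πz4 ((X : Polynomial ℂ) ^ 2)}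

/-!
Multiplication by `a + bz² ∈ A'` acts on coefficients by
`(α, β, γ, δ) ↦ (aα, aβ, aγ + bα, aδ + bβ)`, and `a + bz²` is a unit of `A'` exactly when `a ≠ 0`.
The ratio `β/α` is visibly preserved, and in `δα − γβ` the terms in `b` cancel, so it scales by `a²`
just as `α²` does. Conversely the `z⁰` and `z²` coefficients force `a = α₂/α₁` and
`b = (γ₂α₁ − α₂γ₁)/α₁²`, and the two invariants then match the `z¹` and `z³` coefficients.
-/

noncomputable def cubicz4 (α β γ δ : ℂ) : Rz4 :=
  πz4 (C α + C β * X + C γ * X ^ 2 + C δ * X ^ 3)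

lemma πz4_X_pow_four : πz4 (X ^ 4) = 0 :=
  Ideal.Quotient.eq_zero_iff_mem.2 (Ideal.mem_span_singleton_self _)

lemma cubicz4_inj {α β γ δ α' β' γ' δ' : ℂ} :
    cubicz4 α β γ δ = cubicz4 α' β' γ' δ' ↔ α = α' ∧ β = β' ∧ γ = γ' ∧ δ = δ' := by
  refine ⟨fun h ↦ ?_, by rintro ⟨rfl, rfl, rfl, rfl⟩; rfl⟩
  rw [cubicz4, cubicz4, Ideal.Quotient.eq, Ideal.mem_span_singleton, X_pow_dvd_iff] at h
  have h0 := h 0 (by norm_num)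
  have h1 := h 1 (by norm_num)
  have h2 := h 2 (by norm_num)
  have h3 := h 3 (by norm_num)
  simp [coeff_X_pow, coeff_C, sub_eq_zero] at h0 h1 h2 h3
  exact ⟨h0, h1, h2, h3⟩

lemma cubicz4_mul_cubicz4 (α β γ δ α' β' γ' δ' : ℂ) :
    cubicz4 α β γ δ * cubicz4 α' β' γ' δ' =
      cubicz4 (α * α') (α * β' + β * α') (α * γ' + β * β' + γ * α')
        (α * δ' + β * γ' + γ * β' + δ * α') := by
  have truncate : (C α + C β * X + C γ * X ^ 2 + C δ * X ^ 3) *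
        (C α' + C β' * X + C γ' * X ^ 2 + C δ' * X ^ 3) =
      C (α * α') + C (α * β' + β * α') * X + C (α * γ' + β * β' + γ * α') * X ^ 2 +
        C (α * δ' + β * γ' + γ * β' + δ * α') * X ^ 3 +
      (C (β * δ' + γ * γ' + δ * β') + C (γ * δ' + δ * γ') * X + C (δ * δ') * X ^ 2) * X ^ 4 := by
    simp only [C_add, C_mul]; ring
  rw [cubicz4, cubicz4, cubicz4, ← map_mul, truncate, map_add, map_mul _ _ (X ^ 4),
    πz4_X_pow_four, mul_zero, add_zero]

lemma cubicz4_one : cubicz4 1 0 0 0 = 1 := by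
  simp [cubicz4]

lemma mem_A'z4_iff {x : Rz4} : x ∈ A'z4 ↔ ∃ a b : ℂ, x = cubicz4 a 0 b 0 := by
  constructor
  · intro hx
    induction hx using Algebra.adjoin_induction with
    | mem y hy => exact ⟨0, 1, by rw [Set.mem_singleton_iff.1 hy]; simp [cubicz4]⟩
    | algebraMap r => exact ⟨r, 0, by simp [cubicz4]; rfl⟩
    | add x y _ _ ihx ihy =>
      obtain ⟨a, b, rfl⟩ := ihx
      obtain ⟨c, d, rfl⟩ := ihy
      exact ⟨a + c, b + d, by
        rw [cubicz4, cubicz4, cubicz4, ← map_add]; congr 1; simp only [C_add, C_0]; ring⟩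
    | mul x y _ _ ihx ihy =>
      obtain ⟨a, b, rfl⟩ := ihx
      obtain ⟨c, d, rfl⟩ := ihy
      exact ⟨a * c, a * d + b * c, by rw [cubicz4_mul_cubicz4]; ring_nf⟩
  · rintro ⟨a, b, rfl⟩
    have hz2 : πz4 (X ^ 2) ∈ A'z4 := Algebra.subset_adjoin rfl
    have : cubicz4 a 0 b 0 = algebraMap ℂ Rz4 a + algebraMap ℂ Rz4 b * πz4 (X ^ 2) := by
      simp [cubicz4]; rfl
    rw [this]
    exact add_mem (A'z4.algebraMap_mem a) (mul_mem (A'z4.algebraMap_mem b) hz2)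

lemma exists_unit_A'z4 {a : ℂ} (b : ℂ) (ha : a ≠ 0) :
    ∃ v : (A'z4)ˣ, ((v : A'z4) : Rz4) = cubicz4 a 0 b 0 := by
  have hmul : cubicz4 a 0 b 0 * cubicz4 a⁻¹ 0 (-b / a ^ 2) 0 = 1 := by
    rw [cubicz4_mul_cubicz4, ← cubicz4_one, cubicz4_inj]
    refine ⟨?_, ?_, ?_, ?_⟩ <;> field_simp <;> ring
  exact ⟨Units.mkOfMulEqOne ⟨_, mem_A'z4_iff.2 ⟨a, b, rfl⟩⟩ ⟨_, mem_A'z4_iff.2 ⟨_, _, rfl⟩⟩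
    (Subtype.ext hmul), rfl⟩

lemma exists_unit_mul_cubicz4_iff {α₁ β₁ γ₁ δ₁ α₂ β₂ γ₂ δ₂ : ℂ} :
    (∃ v : (A'z4)ˣ, ((v : A'z4) : Rz4) * cubicz4 α₁ β₁ γ₁ δ₁ = cubicz4 α₂ β₂ γ₂ δ₂) ↔
      ∃ a b : ℂ, a ≠ 0 ∧ a * α₁ = α₂ ∧ a * β₁ = β₂ ∧ a * γ₁ + b * α₁ = γ₂ ∧
        a * δ₁ + b * β₁ = δ₂ := by
  constructor
  · rintro ⟨v, hv⟩
    obtain ⟨a, b, hab⟩ := mem_A'z4_iff.1 (v : A'z4).2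
    obtain ⟨a', b', ha'b'⟩ := mem_A'z4_iff.1 (↑v⁻¹ : A'z4).2
    have hunit : cubicz4 a 0 b 0 * cubicz4 a' 0 b' 0 = cubicz4 1 0 0 0 := by
      rw [← hab, ← ha'b', cubicz4_one]
      exact congrArg Subtype.val v.mul_inv
    rw [cubicz4_mul_cubicz4, cubicz4_inj] at hunit
    rw [hab, cubicz4_mul_cubicz4, cubicz4_inj] at hv
    exact ⟨a, b, left_ne_zero_of_mul_eq_one hunit.1, by simpa using hv⟩
  · rintro ⟨a, b, ha, h⟩
    obtain ⟨v, hv⟩ := exists_unit_A'z4 b ha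
    exact ⟨v, by rw [hv, cubicz4_mul_cubicz4, cubicz4_inj]; simpa using h⟩

lemma orbit_invariants_eq_iff {α₁ β₁ γ₁ δ₁ α₂ β₂ γ₂ δ₂ : ℂ} (h₁ : α₁ ≠ 0) (h₂ : α₂ ≠ 0) :
    (∃ a b : ℂ, a ≠ 0 ∧ a * α₁ = α₂ ∧ a * β₁ = β₂ ∧ a * γ₁ + b * α₁ = γ₂ ∧
        a * δ₁ + b * β₁ = δ₂) ↔
      β₁ / α₁ = β₂ / α₂ ∧ (δ₁ * α₁ - γ₁ * β₁) / α₁ ^ 2 = (δ₂ * α₂ - γ₂ * β₂) / α₂ ^ 2 := by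
  constructor
  · rintro ⟨a, b, ha, rfl, rfl, rfl, rfl⟩
    constructor
    · field_simp
    · field_simp
      ring
  · rintro ⟨hβ, hΔ⟩
    rw [div_eq_div_iff h₁ h₂] at hβ
    rw [div_eq_div_iff (pow_ne_zero 2 h₁) (pow_ne_zero 2 h₂)] at hΔ
    refine ⟨α₂ / α₁, (γ₂ * α₁ - α₂ * γ₁) / α₁ ^ 2, div_ne_zero h₂ h₁, ?_, ?_, ?_, ?_⟩
    · field_simp
    · field_simp; linear_combination hβ
    · field_simp; ring
    · field_simp
      refine mul_left_cancel₀ h₂ ?_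
      linear_combination hΔ + α₁ * γ₂ * hβ

/-- Two units `u₁ = α₁ + β₁z + γ₁z² + δ₁z³` and `u₂ = α₂ + β₂z + γ₂z² + δ₂z³` of
`R = ℂ[z]/(z⁴)` lie in the same orbit of the multiplication action of `(A')ˣ` iff
`β₁/α₁ = β₂/α₂` and `(δ₁α₁ − γ₁β₁)/α₁² = (δ₂α₂ − γ₂β₂)/α₂²`. -/
theorem orbit_iff (α₁ β₁ γ₁ δ₁ α₂ β₂ γ₂ δ₂ : ℂ) (h₁ : α₁ ≠ 0) (h₂ : α₂ ≠ 0) :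
    (∃ v : (A'z4)ˣ,
        ((v : A'z4) : Rz4) * πz4 (C α₁ + C β₁ * X + C γ₁ * X ^ 2 + C δ₁ * X ^ 3) =
          πz4 (C α₂ + C β₂ * X + C γ₂ * X ^ 2 + C δ₂ * X ^ 3)) ↔
      (β₁ / α₁ = β₂ / α₂ ∧
        (δ₁ * α₁ - γ₁ * β₁) / α₁ ^ 2 = (δ₂ * α₂ - γ₂ * β₂) / α₂ ^ 2) :=
  exists_unit_mul_cubicz4_iff.trans (orbit_invariants_eq_iff h₁ h₂)
end
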